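/- In QHC, ⊢ (∇α → !q) ↔ (α → !q) and ⊢ (α → !q) ↔ ∇(α → !q), where ∇α := !?α. -/

import Mathlib

/- Problem (intuitionistic) formulas and proposition (classical) formulas of QHC. -/
mutual
inductive PF : Type
  | var : Nat → PF
  | bot : PF
  | and : PF → PF → PF
  | or : PF → PF → PF
  | imp : PF → PF → PF
  | bang : CF → PF
inductive CF : Type
  | var : Nat → CF
  | fls : CF
  | and : CF → CF → CF
  | or : CF → CF → CF
  | imp : CF → CF → CF
  | quest : PF → CF
end

def PF.neg (α : PF) : PF := α.imp PF.bot
def CF.neg (p : CF) : CF := p.imp CF.fls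
def PF.iff (α β : PF) : PF := (α.imp β).and (β.imp α)
def CF.iff (p q : CF) : CF := (p.imp q).and (q.imp p)
def CF.box (p : CF) : CF := CF.quest (PF.bang p)
def PF.nabla (α : PF) : PF := PF.bang (CF.quest α)

/- Derivability in QHC, parameterized by a set `Ax` of extra problem axioms
(used to treat the axiom ¬!0 and its variants uniformly). Intuitionistic logic
on problems, classical logic on propositions, the rules α ⊢ ?α and p ⊢ !p, and
the mixed axioms ?!p → p, α → !?α, !(p→q) → (!p → !q), ?(α→β) → (?α → ?β). -/
mutual
inductive ProvP (Ax : PF → Prop) : PF → Prop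
  | axm {α} : Ax α → ProvP Ax α
  | mp {α β} : ProvP Ax (α.imp β) → ProvP Ax α → ProvP Ax β
  | ak (α β : PF) : ProvP Ax (α.imp (β.imp α))
  | as (α β γ : PF) : ProvP Ax ((α.imp (β.imp γ)).imp ((α.imp β).imp (α.imp γ)))
  | andI (α β : PF) : ProvP Ax (α.imp (β.imp (α.and β)))
  | andE1 (α β : PF) : ProvP Ax ((α.and β).imp α)
  | andE2 (α β : PF) : ProvP Ax ((α.and β).imp β)
  | orI1 (α β : PF) : ProvP Ax (α.imp (α.or β))
  | orI2 (α β : PF) : ProvP Ax (β.imp (α.or β))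
  | orE (α β γ : PF) : ProvP Ax ((α.imp γ).imp ((β.imp γ).imp ((α.or β).imp γ)))
  | exf (α : PF) : ProvP Ax (PF.bot.imp α)
  | bangIntro {p} : ProvC Ax p → ProvP Ax (PF.bang p)
  | bangImp (p q : CF) : ProvP Ax ((PF.bang (p.imp q)).imp ((PF.bang p).imp (PF.bang q)))
  | bangQuest (α : PF) : ProvP Ax (α.imp (PF.bang (CF.quest α)))
inductive ProvC (Ax : PF → Prop) : CF → Prop
  | mp {p q} : ProvC Ax (p.imp q) → ProvC Ax p → ProvC Ax q
  | ak (p q : CF) : ProvC Ax (p.imp (q.imp p))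
  | as (p q r : CF) : ProvC Ax ((p.imp (q.imp r)).imp ((p.imp q).imp (p.imp r)))
  | andI (p q : CF) : ProvC Ax (p.imp (q.imp (p.and q)))
  | andE1 (p q : CF) : ProvC Ax ((p.and q).imp p)
  | andE2 (p q : CF) : ProvC Ax ((p.and q).imp q)
  | orI1 (p q : CF) : ProvC Ax (p.imp (p.or q))
  | orI2 (p q : CF) : ProvC Ax (q.imp (p.or q))
  | orE (p q r : CF) : ProvC Ax ((p.imp r).imp ((q.imp r).imp ((p.or q).imp r)))
  | exf (p : CF) : ProvC Ax (CF.fls.imp p)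
  | lem (p : CF) : ProvC Ax (p.or (p.imp CF.fls))
  | questIntro {α} : ProvP Ax α → ProvC Ax (CF.quest α)
  | questImp (α β : PF) : ProvC Ax ((CF.quest (α.imp β)).imp ((CF.quest α).imp (CF.quest β)))
  | questBang (p : CF) : ProvC Ax ((CF.quest (PF.bang p)).imp p)
end

/-- The axiom (!⊥): ¬!0. -/
def QHCAx : PF → Prop := fun α => α = (PF.bang CF.fls).imp PF.bot

/-- Derivability of a problem in QHC. -/
def PrvP (α : PF) : Prop := ProvP QHCAx α
/-- Derivability of a proposition in QHC. -/
def PrvC (p : CF) : Prop := ProvC QHCAx p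

/-! The modality ∇ = !? has a unit `α → ∇α` and satisfies the K axiom, so as for any such
modality, an implication into a ∇-stable formula β (one with `∇β → β`) is itself ∇-stable and
does not distinguish `α` from `∇α`. The formula `!q` is ∇-stable because `?!q → q` gives
`∇!q = !?!q → !q`. -/

namespace ProvP

variable {Ax : PF → Prop}

theorem imp_trans {a b c : PF} (hab : ProvP Ax (a.imp b)) (hbc : ProvP Ax (b.imp c)) :
    ProvP Ax (a.imp c) :=
  .mp (.mp (.as a b c) (.mp (.ak (b.imp c) a) hbc)) hab

theorem imp_imp_imp_left (a b c : PF) :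
    ProvP Ax ((b.imp c).imp ((a.imp b).imp (a.imp c))) :=
  imp_trans (.ak (b.imp c) a) (.as a b c)

theorem imp_imp_imp_right {a b : PF} (c : PF) (hab : ProvP Ax (a.imp b)) :
    ProvP Ax ((b.imp c).imp (a.imp c)) :=
  .mp (.mp (.as _ _ _) (imp_imp_imp_left a b c)) (.mp (.ak _ _) hab)

theorem iff_intro {a b : PF} (hab : ProvP Ax (a.imp b)) (hba : ProvP Ax (b.imp a)) :
    ProvP Ax (a.iff b) :=
  .mp (.mp (.andI _ _) hab) hba

theorem nabla_imp (a b : PF) :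
    ProvP Ax ((PF.nabla (a.imp b)).imp ((PF.nabla a).imp (PF.nabla b))) :=
  imp_trans (.mp (.bangImp _ _) (.bangIntro (.questImp a b))) (.bangImp _ _)

theorem nabla_bang_imp_bang (q : CF) : ProvP Ax ((PF.nabla (PF.bang q)).imp (PF.bang q)) :=
  .mp (.bangImp _ _) (.bangIntro (.questBang q))

section NablaStable

variable {β : PF} (hβ : ProvP Ax ((PF.nabla β).imp β))
include hβ

theorem nabla_imp_of_nabla_stable (a : PF) :
    ProvP Ax ((PF.nabla (a.imp β)).imp ((PF.nabla a).imp β)) :=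
  imp_trans (nabla_imp a β) (.mp (imp_imp_imp_left _ _ _) hβ)

theorem nabla_imp_iff_imp_of_nabla_stable (a : PF) :
    ProvP Ax (PF.iff ((PF.nabla a).imp β) (a.imp β)) :=
  iff_intro (imp_imp_imp_right β (.bangQuest a))
    (imp_trans (.bangQuest _) (nabla_imp_of_nabla_stable hβ a))

theorem imp_iff_nabla_imp_of_nabla_stable (a : PF) :
    ProvP Ax (PF.iff (a.imp β) (PF.nabla (a.imp β))) :=
  iff_intro (.bangQuest _)
    (imp_trans (nabla_imp_of_nabla_stable hβ a) (imp_imp_imp_right β (.bangQuest a)))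

end NablaStable

end ProvP

theorem qhc_nabla_imp_bang (α : PF) (q : CF) :
    PrvP (PF.iff ((PF.nabla α).imp (PF.bang q)) (α.imp (PF.bang q))) ∧
    PrvP (PF.iff (α.imp (PF.bang q)) (PF.nabla (α.imp (PF.bang q)))) :=
  ⟨ProvP.nabla_imp_iff_imp_of_nabla_stable (ProvP.nabla_bang_imp_bang q) α,
    ProvP.imp_iff_nabla_imp_of_nabla_stable (ProvP.nabla_bang_imp_bang q) α⟩
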